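/- arXiv:1310.3454 — 2 statements merged into one kernel-verified Lean document; each statement's English description precedes it below -/
import Mathlib

section
/- Let Σ be an M×M positive-definite Hermitian complex matrix and let H be an M×N complex matrix. Then there exists an M×M complex matrix W such that W Σ Wᴴ = I and W H is upper triangular (i.e., (W H) i j = 0 for i > j). -/
/-!
Writing `Σ = Bᴴ B` with `B` invertible, `F = (Bᴴ)⁻¹` whitens `Σ`. Gram–Schmidt applied to the
columns of `F H` (padded with zero columns to `M` vectors) yields an orthonormal basis whose
matrix `Q` is unitary and makes `Qᴴ F H` upper triangular, the `R` factor of a QR decomposition;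
since `Q` is unitary, `W = Qᴴ F` still whitens `Σ`.
-/

open Matrix ComplexOrder

namespace Matrix

variable {𝕜 : Type*} [RCLike 𝕜]

def IsWhiteningFilter {n : Type*} [Fintype n] [DecidableEq n] (A F : Matrix n n 𝕜) : Prop :=
  F * A * Fᴴ = 1

section Whitening

variable {n : Type*} [Fintype n] [DecidableEq n]

open scoped MatrixOrder in
theorem PosDef.exists_isWhiteningFilter {A : Matrix n n 𝕜} (hA : A.PosDef) :
    ∃ F, IsWhiteningFilter A F := by
  obtain ⟨B, hB, rfl⟩ :=
    CStarAlgebra.isStrictlyPositive_iff_eq_star_mul_self.mp hA.isStrictlyPositive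
  have hBdet : IsUnit B.det := (isUnit_iff_isUnit_det B).mp hB
  refine ⟨(Bᴴ)⁻¹, ?_⟩
  rw [IsWhiteningFilter, conjTranspose_nonsing_inv, conjTranspose_conjTranspose,
    star_eq_conjTranspose, ← Matrix.mul_assoc, nonsing_inv_mul _ (by simpa using hBdet.star),
    one_mul, mul_nonsing_inv _ hBdet]

theorem IsWhiteningFilter.conjTranspose_mul {A F U : Matrix n n 𝕜} (hF : IsWhiteningFilter A F)
    (hU : U ∈ unitaryGroup n 𝕜) : IsWhiteningFilter A (Uᴴ * F) := by
  rw [IsWhiteningFilter, Matrix.conjTranspose_mul, conjTranspose_conjTranspose,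
    Matrix.mul_assoc Uᴴ, Matrix.mul_assoc Uᴴ, ← Matrix.mul_assoc (F * A), hF, Matrix.one_mul]
  exact mem_unitaryGroup_iff'.mp hU

end Whitening

theorem exists_mem_unitaryGroup_conjTranspose_mul_upper_triangular {m n : ℕ}
    (G : Matrix (Fin m) (Fin n) 𝕜) : ∃ Q ∈ unitaryGroup (Fin m) 𝕜,
      ∀ (i : Fin m) (j : Fin n), (j : ℕ) < (i : ℕ) → (Qᴴ * G) i j = 0 := by
  let col : Fin m → EuclideanSpace 𝕜 (Fin m) := fun k =>
    if hk : (k : ℕ) < n then WithLp.toLp 2 (fun l => G l ⟨k, hk⟩) else 0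
  let b := InnerProductSpace.gramSchmidtOrthonormalBasis finrank_euclideanSpace col
  refine ⟨(EuclideanSpace.basisFun (Fin m) 𝕜).toBasis.toMatrix b,
    (EuclideanSpace.basisFun (Fin m) 𝕜).toMatrix_orthonormalBasis_mem_unitary b, ?_⟩
  intro i j hij
  have hji : (⟨j, hij.trans i.isLt⟩ : Fin m) < i := hij
  have hb : inner 𝕜 (b i) (col ⟨j, hij.trans i.isLt⟩) = 0 :=
    InnerProductSpace.gramSchmidtOrthonormalBasis_inv_triangular _ col hji
  rw [← hb, EuclideanSpace.inner_eq_star_dotProduct]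
  simp [col, Matrix.mul_apply, dotProduct, Module.Basis.toMatrix_apply, mul_comm]

end Matrix

theorem exists_ewf_triangularizing {M N : ℕ}
    (Sig : Matrix (Fin M) (Fin M) ℂ) (H : Matrix (Fin M) (Fin N) ℂ)
    (hSig : Sig.PosDef) :
    ∃ W : Matrix (Fin M) (Fin M) ℂ, W * Sig * Wᴴ = 1 ∧
      ∀ (i : Fin M) (j : Fin N), (j : ℕ) < (i : ℕ) → (W * H) i j = 0 := by
  obtain ⟨F, hF⟩ := hSig.exists_isWhiteningFilter
  obtain ⟨Q, hQ, hQFH⟩ := exists_mem_unitaryGroup_conjTranspose_mul_upper_triangular (F * H)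
  refine ⟨Qᴴ * F, hF.conjTranspose_mul hQ, fun i j hij => ?_⟩
  rw [Matrix.mul_assoc]
  exact hQFH i j hij
end

section
/- Let Σ be an M×M positive-definite Hermitian complex matrix and let S be an M×M complex matrix. Then there exists an M×M complex matrix W such that W Σ Wᴴ = I and W S is positive semi-definite Hermitian. -/
/-!
If `F` whitens `Sig` and `F S = Q P` is a polar decomposition, then `W = Qᴴ F` works, since
`W Sig Wᴴ = Qᴴ Q = 1` and `W S = P`. For a possibly singular matrix `A`, the polar decomposition
comes from `P = √(Aᴴ A)`: as `‖P x‖ = ‖A x‖`, the map `P x ↦ A x` is a well-defined isometry on the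
range of `P`, and any isometry of a subspace extends to a unitary of the whole space.
-/

open Matrix ComplexOrder

open scoped MatrixOrder

variable {𝕜 : Type*} [RCLike 𝕜]

theorem LinearMap.exists_linearIsometry_comp_eq_of_norm_eq {E V : Type*} [AddCommGroup E]
    [Module 𝕜 E] [NormedAddCommGroup V] [InnerProductSpace 𝕜 V] [FiniteDimensional 𝕜 V]
    (a b : E →ₗ[𝕜] V) (h : ∀ x, ‖a x‖ = ‖b x‖) :
    ∃ u : V →ₗᵢ[𝕜] V, u.toLinearMap ∘ₗ b = a := by
  have hker : ker b ≤ ker a := fun x hx => by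
    rw [mem_ker, ← norm_eq_zero, h, norm_eq_zero]
    exact hx
  let L : range b →ₗ[𝕜] V := (ker b).liftQ a hker ∘ₗ b.quotKerEquivRange.symm.toLinearMap
  have hL : ∀ x, L ⟨b x, mem_range_self b x⟩ = a x := fun x => by
    simp [L, quotKerEquivRange_symm_apply_image]
  let L' : range b →ₗᵢ[𝕜] V :=
    { L with
      norm_map' := by
        rintro ⟨_, x, rfl⟩
        exact (congrArg norm (hL x)).trans (h x) }
  exact ⟨L'.extend, LinearMap.ext fun x => (L'.extend_apply ⟨b x, _⟩).trans (hL x)⟩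

theorem ContinuousLinearMap.exists_mem_unitary_mul_eq_of_star_mul_self_eq {V : Type*}
    [NormedAddCommGroup V] [InnerProductSpace 𝕜 V] [FiniteDimensional 𝕜 V] [CompleteSpace V]
    {a b : V →L[𝕜] V} (h : star a * a = star b * b) :
    ∃ u ∈ unitary (V →L[𝕜] V), a = u * b := by
  have hnorm : ∀ x, ‖a x‖ = ‖b x‖ := fun x => by
    rw [← sq_eq_sq₀ (norm_nonneg _) (norm_nonneg _), apply_norm_sq_eq_inner_adjoint_left,
      apply_norm_sq_eq_inner_adjoint_left, ← star_eq_adjoint, ← star_eq_adjoint, ← mul_def,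
      ← mul_def, h]
  obtain ⟨u, hu⟩ := LinearMap.exists_linearIsometry_comp_eq_of_norm_eq _ _ hnorm
  refine ⟨Unitary.linearIsometryEquiv.symm (u.toLinearIsometryEquiv rfl), SetLike.coe_mem _, ?_⟩
  ext x
  exact (LinearMap.congr_fun hu x).symm

variable {n : Type*} [Fintype n] [DecidableEq n]

theorem Matrix.exists_mem_unitaryGroup_mul_eq_of_conjTranspose_mul_self_eq
    {A B : Matrix n n 𝕜} (h : Aᴴ * A = Bᴴ * B) : ∃ U ∈ unitaryGroup n 𝕜, A = U * B := by
  let T := toEuclideanCLM (n := n) (𝕜 := 𝕜)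
  obtain ⟨u, hu, hab⟩ := ContinuousLinearMap.exists_mem_unitary_mul_eq_of_star_mul_self_eq
    (a := T A) (b := T B) (by simp only [← map_star, ← map_mul, star_eq_conjTranspose, h])
  refine ⟨T.symm u, Unitary.map_mem _ hu, ?_⟩
  simpa using congrArg T.symm hab

theorem Matrix.exists_mem_unitaryGroup_mul_sqrt (A : Matrix n n 𝕜) :
    ∃ U ∈ unitaryGroup n 𝕜, A = U * CFC.sqrt (Aᴴ * A) :=
  exists_mem_unitaryGroup_mul_eq_of_conjTranspose_mul_self_eq <| by
    rw [(CFC.sqrt_nonneg (Aᴴ * A)).posSemidef.isHermitian.eq,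
      CFC.sqrt_mul_sqrt_self _ (posSemidef_conjTranspose_mul_self A).nonneg]

theorem Matrix.PosDef.exists_mul_mul_conjTranspose_eq_one {C : Matrix n n 𝕜} (hC : C.PosDef) :
    ∃ F : Matrix n n 𝕜, F * C * Fᴴ = 1 := by
  set R := CFC.sqrt C
  have hR : R.IsHermitian := (CFC.sqrt_nonneg C).posSemidef.isHermitian
  have hRR : R * R = C := CFC.sqrt_mul_sqrt_self C hC.posSemidef.nonneg
  have hdet : IsUnit R.det :=
    (isUnit_iff_isUnit_det R).1 ((CFC.isUnit_sqrt_iff C hC.posSemidef.nonneg).2 hC.isUnit)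
  refine ⟨R⁻¹, ?_⟩
  rw [conjTranspose_nonsing_inv, hR.eq, ← hRR, ← Matrix.mul_assoc, nonsing_inv_mul R hdet,
    Matrix.one_mul, mul_nonsing_inv R hdet]

theorem exists_ewf_polar {M : ℕ}
    (Sig S : Matrix (Fin M) (Fin M) ℂ)
    (hSig : Sig.PosDef) :
    ∃ W : Matrix (Fin M) (Fin M) ℂ, W * Sig * Wᴴ = 1 ∧ (W * S).PosSemidef := by
  obtain ⟨F, hF⟩ := hSig.exists_mul_mul_conjTranspose_eq_one
  obtain ⟨Q, hQ, hFS⟩ := (F * S).exists_mem_unitaryGroup_mul_sqrt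
  have hQQ : Qᴴ * Q = 1 := mem_unitaryGroup_iff'.1 hQ
  refine ⟨Qᴴ * F, ?_, ?_⟩
  · calc Qᴴ * F * Sig * (Qᴴ * F)ᴴ = Qᴴ * (F * Sig * Fᴴ) * Q := by
          simp only [conjTranspose_mul, conjTranspose_conjTranspose, Matrix.mul_assoc]
      _ = 1 := by rw [hF, Matrix.mul_one, hQQ]
  · rw [Matrix.mul_assoc, hFS, ← Matrix.mul_assoc, hQQ, Matrix.one_mul]
    exact (CFC.sqrt_nonneg _).posSemidef
end
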